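/- Let n = 2h ≥ m + 2 and ℓ = n - 1. For each k with 1 ≤ k ≤ m, there is exactly one pair (x, y) ∈ (ℤ/ℓℤ)² satisfying (1-2k)x + 2k·y = 2k, x = 0, and 2y - x = 2; and for k' ≠ k with 1 ≤ k' ≤ m, there is no pair (x, y) satisfying (1-2k')x + 2k'·y = 2k, x = 0, and 2y - x = 2. -/

import Mathlib

/-! Since ℓ is odd, 2 is a unit in ℤ/ℓℤ. The tail and head conditions then force (x, y) = (0, 1),
and the infinity-region condition collapses to 2k' = 2k, i.e. k' = k; as k, k' ≤ m < ℓ,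
this is an equality of natural numbers. -/

theorem ZMod.isUnit_two_of_odd {ℓ : ℕ} (hℓ : Odd ℓ) : IsUnit (2 : ZMod ℓ) := by
  exact_mod_cast (ZMod.isUnit_iff_coprime 2 ℓ).mpr (Nat.coprime_two_left.mpr hℓ)

theorem twist_coloring_iff {R : Type*} [CommRing R] (h2 : IsUnit (2 : R)) (a c x y : R) :
    ((1 - 2 * a) * x + 2 * a * y = 2 * c ∧ x = 0 ∧ 2 * y - x = 2) ↔
      (x = 0 ∧ y = 1) ∧ a = c := by
  constructor
  · rintro ⟨hinf, rfl, hhead⟩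
    have hy : y = 1 := h2.mul_left_cancel (by linear_combination hhead)
    subst hy
    exact ⟨⟨rfl, rfl⟩, h2.mul_left_cancel (by linear_combination hinf)⟩
  · rintro ⟨⟨rfl, rfl⟩, rfl⟩
    exact ⟨by ring, rfl, by ring⟩

theorem pairwise_inequivalent_colorings_general (m n h ℓ : ℕ) (hn : n = 2 * h)
    (hm : m + 2 ≤ n) (hℓ : ℓ = n - 1) (k : ℕ) (hkm : k ≤ m) :
    (∃! p : ZMod ℓ × ZMod ℓ,
        (1 - 2 * (k : ZMod ℓ)) * p.1 + 2 * (k : ZMod ℓ) * p.2 = 2 * (k : ZMod ℓ) ∧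
        p.1 = 0 ∧ 2 * p.2 - p.1 = 2) ∧
    (∀ k' : ℕ, 1 ≤ k' → k' ≤ m → k' ≠ k →
      ¬ ∃ p : ZMod ℓ × ZMod ℓ,
        (1 - 2 * (k' : ZMod ℓ)) * p.1 + 2 * (k' : ZMod ℓ) * p.2 = 2 * (k : ZMod ℓ) ∧
        p.1 = 0 ∧ 2 * p.2 - p.1 = 2) := by
  have h2 : IsUnit (2 : ZMod ℓ) := ZMod.isUnit_two_of_odd ⟨h - 1, by omega⟩
  refine ⟨?_, fun k' _ hk'm hne ⟨p, hp⟩ => hne ?_⟩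
  · refine ⟨(0, 1), (twist_coloring_iff h2 _ _ _ _).mpr ⟨⟨rfl, rfl⟩, rfl⟩, fun p hp => ?_⟩
    exact Prod.ext_iff.mpr ((twist_coloring_iff h2 _ _ _ _).mp hp).1
  · have hcast : (k' : ZMod ℓ) = k := ((twist_coloring_iff h2 _ _ _ _).mp hp).2
    rwa [ZMod.natCast_eq_natCast_iff', Nat.mod_eq_of_lt (by omega),
      Nat.mod_eq_of_lt (by omega)] at hcast

theorem pairwise_inequivalent_colorings (m n h ℓ : ℕ) (hn : n = 2 * h)
    (hm : m + 2 ≤ n) (hℓ : ℓ = n - 1) (k : ℕ) (hk1 : 1 ≤ k) (hkm : k ≤ m) :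
    (∃! p : ZMod ℓ × ZMod ℓ,
        (1 - 2 * (k : ZMod ℓ)) * p.1 + 2 * (k : ZMod ℓ) * p.2 = 2 * (k : ZMod ℓ) ∧
        p.1 = 0 ∧ 2 * p.2 - p.1 = 2) ∧
    (∀ k' : ℕ, 1 ≤ k' → k' ≤ m → k' ≠ k →
      ¬ ∃ p : ZMod ℓ × ZMod ℓ,
        (1 - 2 * (k' : ZMod ℓ)) * p.1 + 2 * (k' : ZMod ℓ) * p.2 = 2 * (k : ZMod ℓ) ∧
        p.1 = 0 ∧ 2 * p.2 - p.1 = 2) :=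
  pairwise_inequivalent_colorings_general m n h ℓ hn hm hℓ k hkm
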